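/- arXiv:2112.14519 — 2 statements merged into one kernel-verified Lean document; each statement's English description precedes it below -/
import Mathlib

section
/- Let ω = P dx + Q dy with P, Q ∈ C[[x,y]], let f ∈ C[[x,y]] be reduced, let g, h ∈ C[[x,y]] be each relatively prime to f, and let η = η_x dx + η_y dy be a formal 1-form such that gP = h∂_x f + f η_x and gQ = h∂_y f + f η_y. Then for every (a,b) ∈ C² one has i(f, g) + i(f, aP + bQ) = i(f, h) + i(f, a∂_x f + b∂_y f), whenever both sides are finite; in particular the GSV-index i(f,h) − i(f,g) equals i(f, aP+bQ) − i(f, a∂_x f + b∂_y f) for any (a,b) making these intersection numbers finite. -/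
open PowerSeries MvPowerSeries

/-- The ring `ℂ[[x,y]]` of formal power series in two variables. -/
noncomputable abbrev R2 : Type := MvPowerSeries (Fin 2) ℂ

/-- Dimension (as a `ℂ`-vector space) of the quotient by an ideal. -/
noncomputable def idim (I : Ideal R2) : Cardinal := Module.rank ℂ (R2 ⧸ I)

/-- Intersection number `i(f,g) = dim_ℂ ℂ[[x,y]]/(f,g)`. -/
noncomputable def inum (f g : R2) : Cardinal := idim (Ideal.span {f, g})

/-- Formal partial derivative of a two-variable power series. -/
noncomputable def pd (i : Fin 2) (f : R2) : R2 :=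
  fun n => ((n i : ℂ) + 1) * MvPowerSeries.coeff (n + Finsupp.single i 1) f

/-- Evaluation `f(x(t), y(t))` of a two-variable power series along a pair of
one-variable power series with zero constant term. -/
noncomputable def peval (f : R2) (x y : PowerSeries ℂ) : PowerSeries ℂ :=
  PowerSeries.mk fun d =>
    ∑ a ∈ Finset.range (d + 1), ∑ b ∈ Finset.range (d + 1),
      MvPowerSeries.coeff (Finsupp.single 0 a + Finsupp.single 1 b) f *
        PowerSeries.coeff d (x ^ a * y ^ b)

/-- Composition `f(h(t))` of one-variable power series (`h` with zero constant term). -/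
noncomputable def pcomp (f h : PowerSeries ℂ) : PowerSeries ℂ :=
  PowerSeries.mk fun d =>
    ∑ a ∈ Finset.range (d + 1),
      PowerSeries.coeff a f * PowerSeries.coeff d (h ^ a)

/-- A parametrization `(x(t), y(t))` is primitive if it does not factor through a
reparametrization `h(t)` of order `≥ 2`. -/
def IsPrimitiveParam (x y : PowerSeries ℂ) : Prop :=
  ∀ h x' y' : PowerSeries ℂ, PowerSeries.constantCoeff h = 0 →
    x = pcomp x' h → y = pcomp y' h → IsUnit (PowerSeries.coeff 1 h)

/-- The order (algebraic multiplicity) of a two-variable power series: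
the smallest total degree of a nonzero coefficient. -/
noncomputable def nu (f : R2) : ℕ :=
  sInf {d : ℕ | ∃ n : Fin 2 →₀ ℕ, n 0 + n 1 = d ∧ MvPowerSeries.coeff n f ≠ 0}

/-- The Milnor number `μ(f) = dim_ℂ ℂ[[x,y]]/(∂ₓf, ∂_y f)`. -/
noncomputable def mu (f : R2) : Cardinal := inum (pd 0 f) (pd 1 f)

/-! Multiplying the two relations by `a` and `b` gives
`(aP + bQ) g = (a ∂ₓf + b ∂_y f) h + f (a ηx + b ηy)`, hence the ideals
`(f, (aP + bQ) g)` and `(f, (a ∂ₓf + b ∂_y f) h)` coincide. The intersection number is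
additive in a product `u v` as soon as `v` is a nonzerodivisor modulo `f`, by the exact
sequence `0 → 𝒪/(f,u) --·v--> 𝒪/(f,uv) → 𝒪/(f,v) → 0` (with `𝒪 = ℂ[[x,y]]`). A finite
`i(f,v)` makes `v` a nonzerodivisor modulo `f`: `𝒪/(f,v)` is then Artinian, so `(f,v)`
contains powers `x^N` and `y^M`, and `f ∣ x^N c`, `f ∣ y^M c` force `f ∣ c`. -/

universe u

theorem rank_eq_add_of_exact {k : Type*} {M N P : Type u} [Field k]
    [AddCommGroup M] [Module k M] [AddCommGroup N] [Module k N] [AddCommGroup P] [Module k P]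
    {φ : M →ₗ[k] N} {ψ : N →ₗ[k] P} (hφ : Function.Injective φ)
    (hψ : Function.Surjective ψ) (hφψ : Function.Exact φ ψ) :
    Module.rank k N = Module.rank k M + Module.rank k P := by
  rw [ψ.rank_eq_of_surjective hψ, hφψ.linearMap_ker_eq, rank_range_of_injective φ hφ,
    add_comm]

theorem rank_quotient_span_pair_mul (k : Type*) {A : Type u} [Field k] [CommRing A]
    [Algebra k A] (f u v : A) (hv : ∀ c, f ∣ v * c → f ∣ c) :
    Module.rank k (A ⧸ Ideal.span {f, u * v}) =
      Module.rank k (A ⧸ Ideal.span {f, u}) + Module.rank k (A ⧸ Ideal.span {f, v}) := by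
  have hmul :
      Ideal.span {f, u} ≤ Submodule.comap (LinearMap.mulLeft A v) (Ideal.span {f, u * v}) := by
    intro x hx
    obtain ⟨α, β, rfl⟩ := Ideal.mem_span_pair.mp hx
    exact Ideal.mem_span_pair.mpr ⟨v * α, β, by simp only [LinearMap.mulLeft_apply]; ring⟩
  have hle : Ideal.span {f, u * v} ≤ Ideal.span {f, v} :=
    Ideal.span_le.mpr <| by
      rintro _ (rfl | rfl)
      · exact Ideal.subset_span (by simp)
      · exact Ideal.mul_mem_left _ u (Ideal.subset_span (by simp))
  let φ := (Submodule.mapQ _ _ _ hmul).restrictScalars k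
  let ψ := (Ideal.Quotient.factorₐ k hle).toLinearMap
  refine rank_eq_add_of_exact (φ := φ) (ψ := ψ) ?_ (Ideal.Quotient.factor_surjective hle) ?_
  · rw [← LinearMap.ker_eq_bot, eq_bot_iff]
    intro y hy
    obtain ⟨x, rfl⟩ := Ideal.Quotient.mk_surjective y
    obtain ⟨α, β, hαβ⟩ := Ideal.mem_span_pair.mp (Ideal.Quotient.eq_zero_iff_mem.mp hy)
    simp only [LinearMap.mulLeft_apply] at hαβ
    obtain ⟨γ, hγ⟩ := hv (x - β * u) ⟨α, by linear_combination -hαβ⟩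
    exact (Submodule.mem_bot k).mpr <| Ideal.Quotient.eq_zero_iff_mem.mpr <|
      Ideal.mem_span_pair.mpr ⟨γ, β, by linear_combination -hγ⟩
  · intro y
    constructor
    · intro hy
      obtain ⟨x, rfl⟩ := Ideal.Quotient.mk_surjective y
      obtain ⟨α, β, rfl⟩ := Ideal.mem_span_pair.mp (Ideal.Quotient.eq_zero_iff_mem.mp hy)
      refine ⟨Ideal.Quotient.mk _ β,
        Ideal.Quotient.eq.mpr (Ideal.mem_span_pair.mpr ⟨-α, 0, ?_⟩)⟩
      change _ = v * β - _
      ring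
    · rintro ⟨z, rfl⟩
      obtain ⟨β, rfl⟩ := Ideal.Quotient.mk_surjective z
      exact Ideal.Quotient.eq_zero_iff_mem.mpr
        (Ideal.mul_mem_right _ _ (Ideal.subset_span (by simp)))

theorem Ideal.exists_pow_mem_of_mem_jacobson_bot {R : Type*} [CommRing R] {I : Ideal R}
    [IsArtinianRing (R ⧸ I)] {x : R} (hx : x ∈ (⊥ : Ideal R).jacobson) :
    ∃ n : ℕ, x ^ n ∈ I := by
  have hx' : Ideal.Quotient.mk I x ∈ (⊥ : Ideal (R ⧸ I)).jacobson := by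
    rw [Ideal.mem_jacobson_bot] at hx ⊢
    intro y
    obtain ⟨y, rfl⟩ := Ideal.Quotient.mk_surjective y
    simpa using (hx y).map (Ideal.Quotient.mk I)
  rw [IsArtinianRing.jacobson_eq_radical, Ideal.mem_radical_iff] at hx'
  obtain ⟨n, hn⟩ := hx'
  exact ⟨n, by simpa [← map_pow, Ideal.Quotient.eq_zero_iff_mem] using hn⟩

namespace MvPowerSeries

variable {σ R : Type*}

theorem X_mem_jacobson_bot [CommRing R] [IsLocalRing R] (s : σ) :
    (X s : MvPowerSeries σ R) ∈ (⊥ : Ideal (MvPowerSeries σ R)).jacobson := by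
  rw [IsLocalRing.jacobson_eq_maximalIdeal ⊥ bot_ne_top, IsLocalRing.mem_maximalIdeal,
    mem_nonunits_iff, isUnit_iff_constantCoeff, constantCoeff_X]
  exact not_isUnit_zero

theorem X_pow_dvd_of_dvd_X_pow_mul [CommSemiring R] {s t : σ} (hst : s ≠ t) {N M : ℕ}
    {u : MvPowerSeries σ R} (H : X s ^ N ∣ X t ^ M * u) : X s ^ N ∣ u := by
  rw [X_pow_dvd_iff] at H ⊢
  intro m hm
  have h := H (Finsupp.single t M + m) (by simpa [Finsupp.single_apply, hst.symm] using hm)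
  rwa [X_pow_eq, coeff_add_monomial_mul, one_mul] at h

theorem dvd_of_dvd_X_pow_mul [CommRing R] [IsDomain R] {s t : σ} (hst : s ≠ t) {N M : ℕ}
    {f c : MvPowerSeries σ R} (hs : f ∣ X s ^ N * c) (ht : f ∣ X t ^ M * c) : f ∣ c := by
  have hXs : (X s : MvPowerSeries σ R) ^ N ≠ 0 := pow_ne_zero _ fun h => by
    simpa using congrArg (coeff (Finsupp.single s 1)) h
  rcases eq_or_ne f 0 with rfl | hf
  · rw [zero_dvd_iff, mul_eq_zero] at hs
    exact zero_dvd_iff.mpr (hs.resolve_left hXs)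
  obtain ⟨u, hu⟩ := hs
  obtain ⟨w, hw⟩ := ht
  have hcross : X t ^ M * u = X s ^ N * w :=
    mul_left_cancel₀ hf (by linear_combination X s ^ N * hw - X t ^ M * hu)
  obtain ⟨u', rfl⟩ := X_pow_dvd_of_dvd_X_pow_mul hst ⟨w, hcross⟩
  exact ⟨u', mul_left_cancel₀ hXs (by linear_combination hu)⟩

end MvPowerSeries

open Cardinal

theorem dvd_of_dvd_mul_left_of_rank_lt_aleph0 {f v c : R2}
    (hfin : Module.rank ℂ (R2 ⧸ Ideal.span {f, v}) < ℵ₀) (hc : f ∣ v * c) : f ∣ c := by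
  have : Module.Finite ℂ (R2 ⧸ Ideal.span {f, v}) := Module.rank_lt_aleph0_iff.mp hfin
  have : IsArtinianRing (R2 ⧸ Ideal.span {f, v}) := IsArtinianRing.of_finite ℂ _
  have hmem : ∀ w ∈ Ideal.span {f, v}, f ∣ w * c := fun w hw => by
    obtain ⟨α, β, rfl⟩ := Ideal.mem_span_pair.mp hw
    rw [add_mul, mul_assoc, mul_assoc]
    exact ((dvd_mul_right f c).mul_left α).add (hc.mul_left β)
  obtain ⟨N, hN⟩ := Ideal.exists_pow_mem_of_mem_jacobson_bot (I := Ideal.span {f, v})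
    (X_mem_jacobson_bot (R := ℂ) 0)
  obtain ⟨M, hM⟩ := Ideal.exists_pow_mem_of_mem_jacobson_bot (I := Ideal.span {f, v})
    (X_mem_jacobson_bot (R := ℂ) 1)
  exact dvd_of_dvd_X_pow_mul (by decide) (hmem _ hN) (hmem _ hM)

theorem stmt6_general (P Q f g h ηx ηy : R2)
    (e1 : g * P = h * pd 0 f + f * ηx)
    (e2 : g * Q = h * pd 1 f + f * ηy) :
    ∀ a b : ℂ,
      inum f g < Cardinal.aleph0 →
      inum f (a • P + b • Q) < Cardinal.aleph0 →
      inum f h < Cardinal.aleph0 →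
      inum f (a • pd 0 f + b • pd 1 f) < Cardinal.aleph0 →
      inum f g + inum f (a • P + b • Q) =
        inum f h + inum f (a • pd 0 f + b • pd 1 f) := by
  intro a b hg _ hh _
  have hrel :
      (a • P + b • Q) * g = (a • pd 0 f + b • pd 1 f) * h + f * (a • ηx + b • ηy) := by
    simp only [MvPowerSeries.smul_eq_C_mul]
    linear_combination MvPowerSeries.C a * e1 + MvPowerSeries.C b * e2
  have hspan : Ideal.span {f, (a • P + b • Q) * g} =
      Ideal.span {f, (a • pd 0 f + b • pd 1 f) * h} := by
    rw [hrel, Ideal.span_pair_add_left_mul]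
  have hg_reg := fun c ↦ dvd_of_dvd_mul_left_of_rank_lt_aleph0 (c := c) hg
  have hh_reg := fun c ↦ dvd_of_dvd_mul_left_of_rank_lt_aleph0 (c := c) hh
  simp only [inum, idim]
  rw [add_comm, ← rank_quotient_span_pair_mul ℂ _ _ _ hg_reg, hspan,
    rank_quotient_span_pair_mul ℂ _ _ _ hh_reg, add_comm]

theorem stmt6 (P Q f g h ηx ηy : R2)
    (hred : Squarefree f)
    (hfg : IsRelPrime f g) (hfh : IsRelPrime f h)
    (e1 : g * P = h * pd 0 f + f * ηx)
    (e2 : g * Q = h * pd 1 f + f * ηy) :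
    ∀ a b : ℂ,
      inum f g < Cardinal.aleph0 →
      inum f (a • P + b • Q) < Cardinal.aleph0 →
      inum f h < Cardinal.aleph0 →
      inum f (a • pd 0 f + b • pd 1 f) < Cardinal.aleph0 →
      inum f g + inum f (a • P + b • Q) =
        inum f h + inum f (a • pd 0 f + b • pd 1 f) :=
  stmt6_general P Q f g h ηx ηy e1 e2
end

section
/- Let ω = P dx + Q dy with P, Q ∈ C[[x,y]] relatively prime, and let B : f = 0 be a smooth separatrix of ω through the origin with parametrization γ(t) = (t, y(t)) (so f is irreducible of order 1 and γ*(ω) = 0). Suppose g, h ∈ C[[x,y]], each relatively prime to f, and a 1-form η = η_x dx + η_y dy satisfy gP = h ∂_x f + f η_x and gQ = h ∂_y f + f η_y. Then the multiplicity of the foliation along B equals the GSV-index: ord_t Q(γ(t)) = i(f,h) − i(f,g). -/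
open PowerSeries MvPowerSeries

/-!
Since `f` has order one and vanishes on `γ(t) = (t, y(t))`, its linear part is a nonzero multiple
of `y - y'(0) x`, so `∂f/∂y (0) ≠ 0`. Weierstrass division by `f` in `ℂ[[x]][[y]]` then shows that
`f` generates the kernel of the surjection `ℂ[[x,y]] → ℂ[[t]]`, `w ↦ w(γ(t))`. Hence
`ℂ[[x,y]]/(f, u) ≅ ℂ[[t]]/(u(γ))`, i.e. `i(f, u) = ord_t u(γ)` whenever `f ∤ u`. Evaluating
`g Q = h ∂_y f + f η_y` along `γ`, where `∂_y f(γ)` is a unit, gives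
`ord g(γ) + ord Q(γ) = ord h(γ)`.
-/

namespace PowerSeries

variable {k : Type*} [Field k]

theorem rank_quotient_span_X_pow (m : ℕ) :
    Module.rank k (k⟦X⟧ ⧸ Ideal.span {(X : k⟦X⟧) ^ m}) = m := by
  have hdist : (Polynomial.X ^ m : Polynomial k).IsDistinguishedAt ⊥ :=
    { mem := fun hn => by
        rw [Polynomial.natDegree_X_pow] at hn
        simp [Polynomial.coeff_X_pow, hn.ne]
      monic := Polynomial.monic_X_pow m }
  have : Module.Finite k (Polynomial k ⧸ Ideal.span {(Polynomial.X ^ m : Polynomial k)}) :=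
    (AdjoinRoot.powerBasis (Polynomial.monic_X_pow m).ne_zero).finite
  rw [← Polynomial.coe_X, ← Polynomial.coe_pow, ← hdist.algEquivQuotient.toLinearEquiv.rank_eq,
    ← Module.finrank_eq_rank, finrank_quotient_span_eq_natDegree, Polynomial.natDegree_X_pow]

theorem span_singleton_eq_span_X_pow_order {u : k⟦X⟧} (hu : u ≠ 0) :
    Ideal.span {u} = Ideal.span {X ^ u.order.toNat} :=
  Ideal.span_singleton_eq_span_singleton.2 <| Associated.symm
    ⟨(isUnit_divided_by_X_pow_order hu).unit, X_pow_order_mul_divXPowOrder⟩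

theorem toENat_rank_quotient_span_singleton {u : k⟦X⟧} (hu : u ≠ 0) :
    Cardinal.toENat (Module.rank k (k⟦X⟧ ⧸ Ideal.span {u})) = u.order := by
  rw [span_singleton_eq_span_X_pow_order hu, rank_quotient_span_X_pow, Cardinal.toENat_nat,
    ENat.natCast_toNat (order_finite_iff_ne_zero.2 hu).ne]

theorem coeff_X_pow_mul_pow_eq_zero {R : Type*} [CommSemiring R] {y : R⟦X⟧}
    (hy : constantCoeff y = 0) {a b d : ℕ} (h : d < a + b) :
    coeff d ((X : R⟦X⟧) ^ a * y ^ b) = 0 := by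
  obtain ⟨z, rfl⟩ := X_dvd_iff.2 hy
  rw [mul_pow, ← mul_assoc, ← pow_add, coeff_X_pow_mul', if_neg (by omega)]

end PowerSeries

section QuotientSpanPair

variable {k A B : Type*} [CommRing k] [CommRing A] [CommRing B] [Algebra k A] [Algebra k B]
  {φ : A →ₐ[k] B} {f : A}

theorem ker_mkₐ_comp_eq_span_pair (hφ : Function.Surjective φ)
    (hker : RingHom.ker φ = Ideal.span {f}) (g : A) :
    RingHom.ker ((Ideal.Quotient.mkₐ k (Ideal.span {φ g})).comp φ) = Ideal.span {f, g} := by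
  have : RingHom.ker ((Ideal.Quotient.mkₐ k (Ideal.span {φ g})).comp φ) =
      (Ideal.span {φ g}).comap φ := by
    ext w; simp [Ideal.Quotient.eq_zero_iff_mem]
  rw [this, ← Set.image_singleton, ← Ideal.map_span, Ideal.comap_map_of_surjective _ hφ,
    ← RingHom.ker_eq_comap_bot, hker, Ideal.span_insert, sup_comm]

noncomputable def quotientSpanPairAlgEquiv (hφ : Function.Surjective φ)
    (hker : RingHom.ker φ = Ideal.span {f}) (g : A) :
    (A ⧸ Ideal.span {f, g}) ≃ₐ[k] B ⧸ Ideal.span {φ g} :=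
  (Ideal.quotientEquivAlgOfEq k (ker_mkₐ_comp_eq_span_pair hφ hker g).symm).trans
    (Ideal.quotientKerAlgEquivOfSurjective (Ideal.Quotient.mk_surjective.comp hφ))

end QuotientSpanPair

theorem single_zero_add_single_one_self (n : Fin 2 →₀ ℕ) :
    Finsupp.single 0 (n 0) + Finsupp.single 1 (n 1) = n := by
  ext i; fin_cases i <;> simp

theorem finsum_eq_sum_range_sum_range {M : Type*} [AddCommMonoid M] {F : (Fin 2 →₀ ℕ) → M}
    {d : ℕ} (hF : ∀ n, d < n 0 + n 1 → F n = 0) :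
    ∑ᶠ n, F n = ∑ a ∈ Finset.range (d + 1), ∑ b ∈ Finset.range (d + 1),
      F (Finsupp.single 0 a + Finsupp.single 1 b) := by
  have hsupp : Function.support F ⊆ ((Finset.range (d + 1) ×ˢ Finset.range (d + 1)).image
      fun p : ℕ × ℕ => Finsupp.single (0 : Fin 2) p.1 + Finsupp.single 1 p.2 :) := by
    intro n hn
    have hle : n 0 + n 1 ≤ d := not_lt.1 fun hlt => hn (hF n hlt)
    refine Finset.mem_image.2 ⟨(n 0, n 1), ?_, single_zero_add_single_one_self n⟩
    simp only [Finset.mem_product, Finset.mem_range]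
    omega
  have hinj : Set.InjOn (fun p : ℕ × ℕ => Finsupp.single (0 : Fin 2) p.1 + Finsupp.single 1 p.2)
      (Finset.range (d + 1) ×ˢ Finset.range (d + 1) : Finset (ℕ × ℕ)) :=
    fun p _ q _ h => Prod.ext (by simpa using congrArg (· 0) h) (by simpa using congrArg (· 1) h)
  rw [finsum_eq_sum_of_support_subset _ hsupp, Finset.sum_image hinj, Finset.sum_product]

def finTwoEquivOptionUnit : Fin 2 ≃ Option Unit where
  toFun i := if i = 0 then some () else none
  invFun o := o.elim 1 fun _ => 0
  left_inv i := by fin_cases i <;> rfl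
  right_inv o := by rcases o with _ | ⟨⟨⟩⟩ <;> rfl

namespace MvPowerSeries

variable {R : Type*} [CommRing R]

variable (R) in
/-- `X 1` becomes the outer variable, so that a series vanishing at the origin whose coefficient
of `X 1` is a unit becomes a Weierstrass divisor of degree one. -/
noncomputable def finTwoEquivPowerSeries :
    MvPowerSeries (Fin 2) R ≃ₐ[R] PowerSeries (PowerSeries R) :=
  (renameEquiv R finTwoEquivOptionUnit).trans (optionEquivLeft Unit R)
theorem coeff_coeff_finTwoEquivPowerSeries (w : MvPowerSeries (Fin 2) R) (a b : ℕ) :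
    PowerSeries.coeff a (PowerSeries.coeff b (finTwoEquivPowerSeries R w)) =
      coeff (Finsupp.single 0 a + Finsupp.single 1 b) w := by
  have : (Finsupp.single () a : Unit →₀ ℕ).optionElim b = Finsupp.embDomain
      finTwoEquivOptionUnit.toEmbedding (Finsupp.single 0 a + Finsupp.single 1 b) := by
    ext o; rcases o with _ | ⟨⟨⟩⟩ <;> simp [finTwoEquivOptionUnit]
  rw [finTwoEquivPowerSeries, AlgEquiv.trans_apply,
    PowerSeries.coeff_def (s := Finsupp.single () a) (by simp), coeff_coeff_optionEquivLeft, this]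
  exact coeff_embDomain_rename _ w _

theorem constantCoeff_coeff_finTwoEquivPowerSeries (w : MvPowerSeries (Fin 2) R) (b : ℕ) :
    PowerSeries.constantCoeff (PowerSeries.coeff b (finTwoEquivPowerSeries R w)) =
      coeff (Finsupp.single 1 b) w := by
  rw [← PowerSeries.coeff_zero_eq_constantCoeff_apply, coeff_coeff_finTwoEquivPowerSeries,
    Finsupp.single_zero, zero_add]

noncomputable def ofPowerSeriesFirst (p : PowerSeries R) : MvPowerSeries (Fin 2) R :=
  (finTwoEquivPowerSeries R).symm (PowerSeries.C p)

theorem coeff_ofPowerSeriesFirst (p : PowerSeries R) (a b : ℕ) :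
    coeff (Finsupp.single 0 a + Finsupp.single 1 b) (ofPowerSeriesFirst p) =
      if b = 0 then PowerSeries.coeff a p else 0 := by
  rw [← coeff_coeff_finTwoEquivPowerSeries, ofPowerSeriesFirst, AlgEquiv.apply_symm_apply,
    PowerSeries.coeff_C]
  split_ifs <;> simp

theorem order_map_finTwoEquivPowerSeries [Nontrivial R] {f : MvPowerSeries (Fin 2) R}
    (hf₀ : constantCoeff f = 0) (hf₁ : IsUnit (coeff (Finsupp.single 1 1) f)) :
    ((finTwoEquivPowerSeries R f).map (Ideal.Quotient.mk (Ideal.span {PowerSeries.X}))).order =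
      (1 : ℕ) := by
  have hmk (p : PowerSeries R) :
      Ideal.Quotient.mk (Ideal.span {PowerSeries.X}) p = 0 ↔ PowerSeries.constantCoeff p = 0 := by
    rw [Ideal.Quotient.eq_zero_iff_mem, Ideal.mem_span_singleton, PowerSeries.X_dvd_iff]
  rw [PowerSeries.order_eq_nat]
  refine ⟨?_, fun i hi => ?_⟩
  · rw [PowerSeries.coeff_map, Ne, hmk, constantCoeff_coeff_finTwoEquivPowerSeries]
    exact hf₁.ne_zero
  · rw [Nat.lt_one_iff.1 hi, PowerSeries.coeff_map, hmk,
      constantCoeff_coeff_finTwoEquivPowerSeries, Finsupp.single_zero]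
    exact hf₀

theorem exists_eq_mul_add_ofPowerSeriesFirst [Nontrivial R] {f : MvPowerSeries (Fin 2) R}
    (hf₀ : constantCoeff f = 0) (hf₁ : IsUnit (coeff (Finsupp.single 1 1) f))
    (w : MvPowerSeries (Fin 2) R) : ∃ q r, w = f * q + ofPowerSeriesFirst r := by
  have horder := order_map_finTwoEquivPowerSeries hf₀ hf₁
  have hdivisor : (finTwoEquivPowerSeries R f).IsWeierstrassDivisorAt
      (Ideal.span {PowerSeries.X}) := by
    rw [PowerSeries.IsWeierstrassDivisorAt, horder, ENat.toNat_natCast,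
      PowerSeries.isUnit_iff_constantCoeff, constantCoeff_coeff_finTwoEquivPowerSeries]
    exact hf₁
  obtain ⟨q, r, hdeg, hdiv⟩ : ∃ q r, (finTwoEquivPowerSeries R w).IsWeierstrassDivisionAt
      (finTwoEquivPowerSeries R f) q r (Ideal.span {PowerSeries.X}) :=
    ⟨_, _, hdivisor.isWeierstrassDivisionAt_div_mod _⟩
  rw [horder, ENat.toNat_natCast] at hdeg
  rw [Polynomial.eq_C_of_degree_le_zero (Order.le_of_lt_succ hdeg), Polynomial.coe_C] at hdiv
  refine ⟨(finTwoEquivPowerSeries R).symm q, r.coeff 0, ?_⟩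
  rw [ofPowerSeriesFirst, ← AlgEquiv.symm_apply_apply (finTwoEquivPowerSeries R) f, ← map_mul,
    ← map_add, ← hdiv, AlgEquiv.symm_apply_apply]

end MvPowerSeries

section EvalGraph

variable {y : PowerSeries ℂ}

theorem hasSubst_X_graph (hy : PowerSeries.constantCoeff y = 0) :
    HasSubst ![(PowerSeries.X : PowerSeries ℂ), y] :=
  hasSubst_of_constantCoeff_zero fun i => by fin_cases i; exacts [PowerSeries.constantCoeff_X, hy]

theorem peval_eq_subst (hy : PowerSeries.constantCoeff y = 0) (w : R2) :
    peval w PowerSeries.X y = subst ![(PowerSeries.X : PowerSeries ℂ), y] w := by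
  ext d
  have hprod (n : Fin 2 →₀ ℕ) : (n.prod fun s e => ![(PowerSeries.X : PowerSeries ℂ), y] s ^ e)
      = PowerSeries.X ^ n 0 * y ^ n 1 := by
    rw [Finsupp.prod_fintype _ _ fun _ => pow_zero _, Fin.prod_univ_two]; rfl
  -- `coeff_subst` speaks about `MvPowerSeries Unit ℂ`, the carrier of `PowerSeries ℂ`.
  have hd : (Finsupp.single () d : Unit →₀ ℕ) () = d := Finsupp.single_eq_same
  conv_rhs => rw [PowerSeries.coeff_def hd, coeff_subst (hasSubst_X_graph hy)]
  simp only [hprod, smul_eq_mul, ← PowerSeries.coeff_def hd]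
  rw [finsum_eq_sum_range_sum_range (d := d) fun n hn => by
    rw [PowerSeries.coeff_X_pow_mul_pow_eq_zero hy hn, mul_zero]]
  simp [peval]

noncomputable def evalGraph (hy : PowerSeries.constantCoeff y = 0) : R2 →ₐ[ℂ] PowerSeries ℂ :=
  substAlgHom (hasSubst_X_graph hy)

theorem evalGraph_apply (hy : PowerSeries.constantCoeff y = 0) (w : R2) :
    evalGraph hy w = peval w PowerSeries.X y := by
  rw [evalGraph, substAlgHom_apply, peval_eq_subst hy]

theorem peval_ofPowerSeriesFirst (p : PowerSeries ℂ) :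
    peval (ofPowerSeriesFirst p) PowerSeries.X y = p := by
  ext d
  simp [peval, coeff_ofPowerSeriesFirst, PowerSeries.coeff_X_pow]

theorem evalGraph_surjective (hy : PowerSeries.constantCoeff y = 0) :
    Function.Surjective (evalGraph hy) :=
  fun p => ⟨ofPowerSeriesFirst p, by rw [evalGraph_apply, peval_ofPowerSeriesFirst]⟩

theorem dvd_of_peval_eq_zero (hy : PowerSeries.constantCoeff y = 0) {f w : R2}
    (hf₀ : MvPowerSeries.constantCoeff f = 0) (hf₁ : coeff (Finsupp.single 1 1) f ≠ 0)
    (hf : peval f PowerSeries.X y = 0) (hw : peval w PowerSeries.X y = 0) : f ∣ w := by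
  obtain ⟨q, r, rfl⟩ := exists_eq_mul_add_ofPowerSeriesFirst hf₀ hf₁.isUnit w
  have hr : r = 0 := by
    rw [← evalGraph_apply hy] at hf hw
    rwa [map_add, map_mul, hf, zero_mul, zero_add, evalGraph_apply,
      peval_ofPowerSeriesFirst] at hw
  exact ⟨q, by rw [hr, ofPowerSeriesFirst, map_zero, map_zero, add_zero]⟩

theorem ker_evalGraph (hy : PowerSeries.constantCoeff y = 0) {f : R2}
    (hf₀ : MvPowerSeries.constantCoeff f = 0) (hf₁ : coeff (Finsupp.single 1 1) f ≠ 0)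
    (hf : peval f PowerSeries.X y = 0) : RingHom.ker (evalGraph hy) = Ideal.span {f} := by
  ext w
  rw [RingHom.mem_ker, Ideal.mem_span_singleton, evalGraph_apply]
  refine ⟨dvd_of_peval_eq_zero hy hf₀ hf₁ hf, ?_⟩
  rintro ⟨q, rfl⟩
  rw [← evalGraph_apply hy, map_mul, evalGraph_apply, hf, zero_mul]

theorem toENat_inum_eq_order_peval (hy : PowerSeries.constantCoeff y = 0) {f g : R2}
    (hf₀ : MvPowerSeries.constantCoeff f = 0) (hf₁ : coeff (Finsupp.single 1 1) f ≠ 0)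
    (hf : peval f PowerSeries.X y = 0) (hg : ¬ f ∣ g) :
    Cardinal.toENat (inum f g) = (peval g PowerSeries.X y).order := by
  have hg' : peval g PowerSeries.X y ≠ 0 := fun h => hg (dvd_of_peval_eq_zero hy hf₀ hf₁ hf h)
  rw [inum, idim, (quotientSpanPairAlgEquiv (evalGraph_surjective hy)
    (ker_evalGraph hy hf₀ hf₁ hf) g).toLinearEquiv.rank_eq, evalGraph_apply,
    PowerSeries.toENat_rank_quotient_span_singleton hg']

theorem constantCoeff_peval (w : R2) :
    PowerSeries.constantCoeff (peval w PowerSeries.X y) = MvPowerSeries.constantCoeff w := by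
  rw [← PowerSeries.coeff_zero_eq_constantCoeff_apply, peval, PowerSeries.coeff_mk]
  simp

theorem coeff_one_peval (hy : PowerSeries.constantCoeff y = 0) (w : R2) :
    PowerSeries.coeff 1 (peval w PowerSeries.X y) =
      coeff (Finsupp.single 0 1) w + coeff (Finsupp.single 1 1) w * PowerSeries.coeff 1 y := by
  simp only [peval, coeff_mk, Finset.sum_range_succ, Finset.range_one, Finset.sum_singleton,
    Finsupp.single_zero, add_zero, zero_add, pow_zero, pow_one, mul_one, one_mul, mul_zero,
    PowerSeries.coeff_X_pow, mul_ite, one_ne_zero, ↓reduceIte, PowerSeries.coeff_succ_X_mul,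
    PowerSeries.coeff_zero_eq_constantCoeff, map_pow, hy]
  ring

end EvalGraph

theorem constantCoeff_eq_zero_of_nu_eq_one {f : R2} (h : nu f = 1) :
    MvPowerSeries.constantCoeff f = 0 := by
  by_contra h0
  have : nu f = 0 := Nat.sInf_eq_zero.2 (Or.inl ⟨0, by simp, h0⟩)
  omega

theorem coeff_single_ne_zero_of_nu_eq_one {f : R2} (h : nu f = 1) :
    coeff (Finsupp.single 0 1) f ≠ 0 ∨ coeff (Finsupp.single 1 1) f ≠ 0 := by
  have hne : {d : ℕ | ∃ n : Fin 2 →₀ ℕ, n 0 + n 1 = d ∧ coeff n f ≠ 0}.Nonempty := by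
    by_contra hempty
    rw [Set.not_nonempty_iff_eq_empty] at hempty
    rw [nu, hempty, Nat.sInf_empty] at h
    exact zero_ne_one h
  have hmem : nu f ∈ {d : ℕ | ∃ n : Fin 2 →₀ ℕ, n 0 + n 1 = d ∧ coeff n f ≠ 0} :=
    Nat.sInf_mem hne
  obtain ⟨n, hn, hcoeff⟩ := h ▸ hmem
  rw [← single_zero_add_single_one_self n] at hcoeff
  rcases Nat.add_eq_one_iff.1 hn with ⟨h0, h1⟩ | ⟨h0, h1⟩
  · right; simpa [h0, h1] using hcoeff
  · left; simpa [h0, h1] using hcoeff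

theorem coeff_single_one_ne_zero_of_peval_eq_zero {y : PowerSeries ℂ}
    (hy : PowerSeries.constantCoeff y = 0) {f : R2}
    (h : coeff (Finsupp.single 0 1) f ≠ 0 ∨ coeff (Finsupp.single 1 1) f ≠ 0)
    (hf : peval f PowerSeries.X y = 0) : coeff (Finsupp.single 1 1) f ≠ 0 := by
  have hlin := coeff_one_peval hy f
  rw [hf, map_zero] at hlin
  intro h1
  rw [h1, zero_mul, add_zero] at hlin
  exact h.resolve_right (not_not.2 h1) hlin.symm

theorem constantCoeff_pd (i : Fin 2) (f : R2) :
    MvPowerSeries.constantCoeff (pd i f) = coeff (Finsupp.single i 1) f := by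
  change (((0 : Fin 2 →₀ ℕ) i : ℂ) + 1) * coeff (0 + Finsupp.single i 1) f = _
  simp

theorem stmt14_general (Q f g h ηy : R2)
    (hnuf : nu f = 1)
    (y : PowerSeries ℂ) (hy0 : PowerSeries.constantCoeff y = 0)
    (hpar : peval f PowerSeries.X y = 0)
    (hfg : IsRelPrime f g) (hfh : IsRelPrime f h)
    (e2 : g * Q = h * pd 1 f + f * ηy) :
    (peval Q PowerSeries.X y).order + Cardinal.toENat (inum f g) =
      Cardinal.toENat (inum f h) := by
  have hf₀ := constantCoeff_eq_zero_of_nu_eq_one hnuf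
  have hf₁ := coeff_single_one_ne_zero_of_peval_eq_zero hy0
    (coeff_single_ne_zero_of_nu_eq_one hnuf) hpar
  have hnot_dvd {u : R2} (hu : IsRelPrime f u) : ¬ f ∣ u := fun hdvd => by
    simpa [hf₀] using MvPowerSeries.isUnit_iff_constantCoeff.1 (hu dvd_rfl hdvd)
  have hpd : (peval (pd 1 f) PowerSeries.X y).order = 0 := by
    refine PowerSeries.order_zero_of_unit (PowerSeries.isUnit_iff_constantCoeff.2 ?_)
    rw [constantCoeff_peval, constantCoeff_pd]
    exact hf₁.isUnit
  have he2 := congrArg (evalGraph hy0) e2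
  simp only [map_mul, map_add, evalGraph_apply, hpar, zero_mul, add_zero] at he2
  rw [toENat_inum_eq_order_peval hy0 hf₀ hf₁ hpar (hnot_dvd hfg),
    toENat_inum_eq_order_peval hy0 hf₀ hf₁ hpar (hnot_dvd hfh), add_comm,
    ← PowerSeries.order_mul, he2, PowerSeries.order_mul, hpd, add_zero]

theorem stmt14 (P Q f g h ηx ηy : R2) (hPQ : IsRelPrime P Q)
    (hf : Irreducible f) (hnuf : nu f = 1)
    (y : PowerSeries ℂ) (hy0 : PowerSeries.constantCoeff y = 0)
    (hpar : peval f PowerSeries.X y = 0)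
    (hsep : peval P PowerSeries.X y
          + peval Q PowerSeries.X y * PowerSeries.derivativeFun y = 0)
    (hfg : IsRelPrime f g) (hfh : IsRelPrime f h)
    (e1 : g * P = h * pd 0 f + f * ηx)
    (e2 : g * Q = h * pd 1 f + f * ηy) :
    (peval Q PowerSeries.X y).order + Cardinal.toENat (inum f g) =
      Cardinal.toENat (inum f h) :=
  stmt14_general Q f g h ηy hnuf y hy0 hpar hfg hfh e2
end
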